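/- Let ∂_k^γ be a face operation on n-cubes and let θ be a non-identity precubical operation complementary to ∂_k^γ. Then the standard decomposition of θ contains no factor ∂_{k−1}^γ, ∂_k^−, ∂_k^+, or ∂_{k+1}^γ. Consequently, in a stratified precubical set, any n-box b opposite ∂_k^γ such that θb is thin for every non-identity precubical operation θ whose standard decomposition contains none of ∂_{k−1}^γ, ∂_k^−, ∂_k^+, ∂_{k+1}^γ is admissible. -/

import Mathlib

namespace CubicalNerve

/-- Signs: `true` is `+`, `false` is `−`, as an integer `±1`. -/
def sgn (α : Bool) : ℤ := if α then 1 else -1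

/-- A stratified precubical set: a sequence of sets `X n` with face operations
`∂_i^α : X n → X (n-1)` (with `i : Fin n`, i.e. `i+1` in the paper's 1-indexing)
satisfying the precubical relations, together with a class of thin `n`-cubes for
`n ≥ 1` (a `0`-cube is never thin). -/
structure SPS where
  X : ℕ → Type
  face : ∀ {n : ℕ}, Fin n → Bool → X n → X (n - 1)
  face_rel : ∀ {n : ℕ} (j : Fin n) (i : Fin (n - 1)) (h : (j : ℕ) ≤ (i : ℕ)) (α β : Bool)
      (x : X n),
    face i α (face j β x) =
      face ⟨(j : ℕ), lt_of_le_of_lt h i.isLt⟩ β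
        (face ⟨(i : ℕ) + 1, by have := i.isLt; omega⟩ α x)
  thin : ∀ {n : ℕ}, X n → Prop
  thin_zero : ∀ x : X 0, ¬ thin x

/-- The face operation `∂_i^α` with a 1-indexed natural number index (clamped into
range); the identity map in dimension `0`. -/
def SPS.faceN (P : SPS) (i : ℕ) (α : Bool) : ∀ {n : ℕ}, P.X n → P.X (n - 1)
  | 0, x => x
  | m + 1, x =>
      P.face (⟨min (i - 1) m, Nat.lt_succ_of_le (Nat.min_le_right _ _)⟩ : Fin (m + 1)) α x

/-- The action of a nonidentity precubical operation, written as a nonempty list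
`(p :: L)` of 1-indexed (index, sign) pairs composed right-to-left (so the last
entry of the list is applied first), on a box or shell `b` (given as a family of
`m`-cubes indexed by all of `Fin (m+1) × Bool`): the last factor picks out an entry
of `b`, and the remaining factors act by face operations. -/
def SPS.apBoxAux (P : SPS) {m : ℕ} (b : Fin (m + 1) → Bool → P.X m) :
    (ℕ × Bool) → (L : List (ℕ × Bool)) → P.X (m - L.length)
  | p, [] => b ⟨min (p.1 - 1) m, Nat.lt_succ_of_le (Nat.min_le_right _ _)⟩ p.2
  | p, q :: L => P.faceN p.1 p.2 (P.apBoxAux b q L)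

/-- `L` is the standard decomposition of a precubical operation on `n`-cubes:
its 1-indexed indices are strictly increasing and lie in `{1, …, n}`. -/
def IsStdList (n : ℕ) (L : List (ℕ × Bool)) : Prop :=
  L.Chain' (fun p q => p.1 < q.1) ∧ ∀ p ∈ L, 1 ≤ p.1 ∧ p.1 ≤ n

/-- Insertion of a factor into a standard decomposition, preserving the order. -/
def insSorted (a : ℕ × Bool) : List (ℕ × Bool) → List (ℕ × Bool)
  | [] => [a]
  | p :: L => if a.1 ≤ p.1 then a :: p :: L else p :: insSorted a L

/-- The standard decomposition `L` has constant sign: `(−1)^{i(r)−r} α(r)` is the same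
for all `r`, where `∂_{i(r)}^{α(r)}` is the `r`-th factor (`r` 1-indexed). -/
def ConstSign (L : List (ℕ × Bool)) : Prop :=
  ∃ ε : ℤ, ∀ (t : ℕ) (h : t < L.length),
    (-1 : ℤ) ^ ((L.get ⟨t, h⟩).1 + t + 1) * sgn (L.get ⟨t, h⟩).2 = ε

/-- The precubical operation with standard decomposition `L` (on `n`-cubes) is
complementary to the face operation `∂_k^γ` (`k` 1-indexed): `L` has no factor
`∂_k^±`, and inserting `∂_k^{−γ}` produces a standard decomposition with constant
sign. -/
def ComplOp (n k : ℕ) (γ : Bool) (L : List (ℕ × Bool)) : Prop :=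
  IsStdList n L ∧ (∀ p ∈ L, p.1 ≠ k) ∧ ConstSign (insSorted (k, !γ) L)

/-- The face operation `∂_l^δ` is complementary to `∂_k^γ` (1-indexed). -/
def FaceComplOp (n k : ℕ) (γ : Bool) (l : ℕ) (δ : Bool) : Prop := ComplOp n k γ [(l, δ)]

/-- `b` is an `(m+1)`-box opposite `∂_k^γ`, recorded as a total family of `m`-cubes
whose value at `(k, γ)` is irrelevant: the compatibility conditions
`∂_i^α b_j^β = ∂_j^β b_{i+1}^α` hold whenever neither index involved is `(k, γ)`. -/
def SPS.IsBox (P : SPS) {m : ℕ} (k : Fin (m + 1)) (γ : Bool)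
    (b : Fin (m + 1) → Bool → P.X m) : Prop :=
  ∀ (j : Fin (m + 1)) (i : Fin m) (h : (j : ℕ) ≤ (i : ℕ)) (α β : Bool),
    ((j, β) : Fin (m + 1) × Bool) ≠ (k, γ) →
    ((⟨(i : ℕ) + 1, by have := i.isLt; omega⟩, α) : Fin (m + 1) × Bool) ≠ (k, γ) →
    P.face i α (b j β) =
      P.face ⟨(j : ℕ), lt_of_le_of_lt h i.isLt⟩ β
        (b ⟨(i : ℕ) + 1, by have := i.isLt; omega⟩ α)

/-- `s` is an `(m+1)`-shell: a family of `m`-cubes indexed by all the face operations,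
with `∂_i^α s_j^β = ∂_j^β s_{i+1}^α` for `i ≥ j`. -/
def SPS.IsShell (P : SPS) {m : ℕ} (s : Fin (m + 1) → Bool → P.X m) : Prop :=
  ∀ (j : Fin (m + 1)) (i : Fin m) (h : (j : ℕ) ≤ (i : ℕ)) (α β : Bool),
    P.face i α (s j β) =
      P.face ⟨(j : ℕ), lt_of_le_of_lt h i.isLt⟩ β
        (s ⟨(i : ℕ) + 1, by have := i.isLt; omega⟩ α)

/-- The box `b` opposite `∂_k^γ` is admissible: `θ b` is thin for every non-identity
precubical operation `θ` complementary to `∂_k^γ`. -/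
def SPS.AdmBox (P : SPS) {m : ℕ} (k : Fin (m + 1)) (γ : Bool)
    (b : Fin (m + 1) → Bool → P.X m) : Prop :=
  P.IsBox k γ b ∧
  ∀ (p : ℕ × Bool) (L : List (ℕ × Bool)),
    ComplOp (m + 1) ((k : ℕ) + 1) γ (p :: L) → P.thin (P.apBoxAux b p L)

/-- The shell `s` is admissible: there are distinct, mutually non-complementary face
operations `∂_k^γ` and `∂_l^δ` with `s_k^γ = s_l^δ` such that the boxes obtained by
removing either are admissible. -/
def SPS.AdmShell (P : SPS) {m : ℕ} (s : Fin (m + 1) → Bool → P.X m) : Prop :=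
  P.IsShell s ∧
  ∃ (k l : Fin (m + 1)) (γ δ : Bool),
    ((k, γ) : Fin (m + 1) × Bool) ≠ (l, δ) ∧
    ¬ FaceComplOp (m + 1) ((k : ℕ) + 1) γ ((l : ℕ) + 1) δ ∧
    ¬ FaceComplOp (m + 1) ((l : ℕ) + 1) δ ((k : ℕ) + 1) γ ∧
    s k γ = s l δ ∧ P.AdmBox k γ s ∧ P.AdmBox l δ s

/-- `x` is a filler of the box `b` opposite `∂_k^γ`. -/
def SPS.FillsBox (P : SPS) {m : ℕ} (k : Fin (m + 1)) (γ : Bool)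
    (b : Fin (m + 1) → Bool → P.X m) (x : P.X (m + 1)) : Prop :=
  ∀ (i : Fin (m + 1)) (α : Bool), ((i, α) : Fin (m + 1) × Bool) ≠ (k, γ) →
    P.face i α x = b i α

/-- `x` is a filler of the shell `s`. -/
def SPS.FillsShell (P : SPS) {m : ℕ} (s : Fin (m + 1) → Bool → P.X m)
    (x : P.X (m + 1)) : Prop :=
  ∀ (i : Fin (m + 1)) (α : Bool), P.face i α x = s i α

/-- `P` is a *complete* stratified precubical set: every admissible box and every
admissible shell has a unique thin filler, and if `x` is the thin filler of an
admissible box `b` opposite `∂_k^γ` all of whose entries are thin, then the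
additional face `∂_k^γ x` is thin as well. -/
def SPS.IsComplete (P : SPS) : Prop :=
  (∀ (m : ℕ) (k : Fin (m + 1)) (γ : Bool) (b : Fin (m + 1) → Bool → P.X m),
     P.AdmBox k γ b → ∃! x : P.X (m + 1), P.thin x ∧ P.FillsBox k γ b x) ∧
  (∀ (m : ℕ) (s : Fin (m + 1) → Bool → P.X m),
     P.AdmShell s → ∃! x : P.X (m + 1), P.thin x ∧ P.FillsShell s x) ∧
  (∀ (m : ℕ) (k : Fin (m + 1)) (γ : Bool) (b : Fin (m + 1) → Bool → P.X m)
     (x : P.X (m + 1)),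
     P.AdmBox k γ b → P.thin x → P.FillsBox k γ b x →
     (∀ (i : Fin (m + 1)) (α : Bool), ((i, α) : Fin (m + 1) × Bool) ≠ (k, γ) →
        P.thin (b i α)) →
     P.thin (P.face k γ x))

/-- `E` is the system of degeneracy operations `ε` of a complete stratified precubical
set: `E n k x` (`x` an `n`-cube, `k : Fin (n+1)`, i.e. `ε_{k+1}` in 1-indexed notation)
is thin with faces `∂_i^α ε_k x = ε_{k-1} ∂_i^α x` for `i < k`, `∂_k^± ε_k x = x`,
and `∂_i^α ε_k x = ε_k ∂_{i-1}^α x` for `i > k`. -/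
def SPS.IsDegSys (P : SPS) (E : ∀ n : ℕ, Fin (n + 1) → P.X n → P.X (n + 1)) : Prop :=
  (∀ (n : ℕ) (k : Fin (n + 1)) (x : P.X n), P.thin (E n k x)) ∧
  (∀ (n : ℕ) (k : Fin (n + 1)) (α : Bool) (x : P.X n), P.face k α (E n k x) = x) ∧
  (∀ (n : ℕ) (k i : Fin (n + 2)) (α : Bool) (x : P.X (n + 1)) (h : (i : ℕ) < (k : ℕ)),
     P.face i α (E (n + 1) k x) =
       E n ⟨(k : ℕ) - 1, by have := k.isLt; omega⟩
         (P.face ⟨(i : ℕ), by have := k.isLt; omega⟩ α x)) ∧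
  (∀ (n : ℕ) (k i : Fin (n + 2)) (α : Bool) (x : P.X (n + 1)) (h : (k : ℕ) < (i : ℕ)),
     P.face i α (E (n + 1) k x) =
       E n ⟨(k : ℕ), by have := i.isLt; omega⟩
         (P.face ⟨(i : ℕ) - 1, by have := i.isLt; omega⟩ α x))

/-- `Γ` is the system of connection operations of a complete stratified precubical set
(`Γ n k γ x` for `x` an `(n+1)`-cube and `k : Fin (n+1)`, i.e. `Γ_{k+1}^γ`). -/
def SPS.IsConnSys (P : SPS) (E : ∀ n : ℕ, Fin (n + 1) → P.X n → P.X (n + 1))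
    (Γ : ∀ n : ℕ, Fin (n + 1) → Bool → P.X (n + 1) → P.X (n + 2)) : Prop :=
  (∀ (n : ℕ) (k : Fin (n + 1)) (γ : Bool) (x : P.X (n + 1)), P.thin (Γ n k γ x)) ∧
  (∀ (n : ℕ) (k : Fin (n + 1)) (γ : Bool) (x : P.X (n + 1)),
     P.face k.castSucc γ (Γ n k γ x) = x ∧ P.face k.succ γ (Γ n k γ x) = x) ∧
  (∀ (n : ℕ) (k : Fin (n + 1)) (γ : Bool) (x : P.X (n + 1)),
     P.face k.castSucc (!γ) (Γ n k γ x) = E n k (P.face k (!γ) x) ∧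
     P.face k.succ (!γ) (Γ n k γ x) = E n k (P.face k (!γ) x)) ∧
  (∀ (n : ℕ) (k : Fin (n + 2)) (γ : Bool) (i : Fin (n + 3)) (α : Bool) (x : P.X (n + 2))
     (h : (i : ℕ) < (k : ℕ)),
     P.face i α (Γ (n + 1) k γ x) =
       Γ n ⟨(k : ℕ) - 1, by have := k.isLt; omega⟩ γ
         (P.face ⟨(i : ℕ), by have := k.isLt; omega⟩ α x)) ∧
  (∀ (n : ℕ) (k : Fin (n + 2)) (γ : Bool) (i : Fin (n + 3)) (α : Bool) (x : P.X (n + 2))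
     (h : (k : ℕ) + 1 < (i : ℕ)),
     P.face i α (Γ (n + 1) k γ x) =
       Γ n ⟨(k : ℕ), by have := i.isLt; omega⟩ γ
         (P.face ⟨(i : ℕ) - 1, by have := i.isLt; omega⟩ α x))

/-- `G` is the system of composers of a complete stratified precubical set:
whenever `∂_k^+ x = ∂_k^- y`, the `(n+2)`-cube `G n k x y` is thin and has the faces
prescribed in the definition of the composer `G_k(x, y)` (all of them except the one
opposite `∂_k^-`). -/
def SPS.IsCompSys (P : SPS) (E : ∀ n : ℕ, Fin (n + 1) → P.X n → P.X (n + 1))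
    (G : ∀ n : ℕ, Fin (n + 1) → P.X (n + 1) → P.X (n + 1) → P.X (n + 2)) : Prop :=
  (∀ (n : ℕ) (k : Fin (n + 1)) (x y : P.X (n + 1)),
     P.face k true x = P.face k false y → P.thin (G n k x y)) ∧
  (∀ (n : ℕ) (k : Fin (n + 1)) (x y : P.X (n + 1)),
     P.face k true x = P.face k false y →
       P.face k.castSucc true (G n k x y) = y ∧
       P.face k.succ false (G n k x y) = x ∧
       P.face k.succ true (G n k x y) = E n k (P.face k true y)) ∧
  (∀ (n : ℕ) (k : Fin (n + 2)) (i : Fin (n + 3)) (α : Bool) (x y : P.X (n + 2)),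
     P.face k true x = P.face k false y → ∀ h : (i : ℕ) < (k : ℕ),
     P.face i α (G (n + 1) k x y) =
       G n ⟨(k : ℕ) - 1, by have := k.isLt; omega⟩
         (P.face ⟨(i : ℕ), by have := k.isLt; omega⟩ α x)
         (P.face ⟨(i : ℕ), by have := k.isLt; omega⟩ α y)) ∧
  (∀ (n : ℕ) (k : Fin (n + 2)) (i : Fin (n + 3)) (α : Bool) (x y : P.X (n + 2)),
     P.face k true x = P.face k false y → ∀ h : (k : ℕ) + 1 < (i : ℕ),
     P.face i α (G (n + 1) k x y) =
       G n ⟨(k : ℕ), by have := i.isLt; omega⟩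
         (P.face ⟨(i : ℕ) - 1, by have := i.isLt; omega⟩ α x)
         (P.face ⟨(i : ℕ) - 1, by have := i.isLt; omega⟩ α y))

/-- The composite `x ∘_k y = ∂_k^- G_k(x, y)`. -/
def SPS.cmp (P : SPS) (G : ∀ n : ℕ, Fin (n + 1) → P.X (n + 1) → P.X (n + 1) → P.X (n + 2))
    {n : ℕ} (k : Fin (n + 1)) (x y : P.X (n + 1)) : P.X (n + 1) :=
  P.face k.castSucc false (G n k x y)

/-!
Inserting `∂_k^{−γ}` into a standard decomposition keeps it standard, and in a standard
decomposition two factors `∂_i^α`, `∂_{i+1}^β` with consecutive indices stand in consecutive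
positions `r`, `r + 1`; so `i(r) − r` has the same parity for both and constant sign forces
`α = β`. A factor `∂_{k−1}^γ` or `∂_{k+1}^γ` of a complementary operation would therefore carry
the sign `−γ` of the inserted factor. Admissibility follows because every complementary
operation is among those avoiding the four factors.
-/

lemma sgn_injective : Function.Injective sgn := by decide

lemma mem_insSorted {a p : ℕ × Bool} {L : List (ℕ × Bool)} :
    p ∈ insSorted a L ↔ p = a ∨ p ∈ L := by
  induction L with
  | nil => simp [insSorted]
  | cons q L ih => unfold insSorted; split_ifs <;> simp [ih, or_left_comm]

lemma pairwise_insSorted {a : ℕ × Bool} {L : List (ℕ × Bool)}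
    (hL : L.Pairwise (fun p q => p.1 < q.1)) (ha : ∀ p ∈ L, p.1 ≠ a.1) :
    (insSorted a L).Pairwise (fun p q => p.1 < q.1) := by
  induction L with
  | nil => simp [insSorted]
  | cons q L ih =>
    simp only [List.pairwise_cons, List.mem_cons, forall_eq_or_imp] at hL ha
    unfold insSorted
    split_ifs with h
    · simp only [List.pairwise_cons, List.mem_cons, forall_eq_or_imp]
      refine ⟨⟨by omega, fun p hp => by have := hL.1 p hp; omega⟩, hL⟩
    · refine List.pairwise_cons.2 ⟨fun p hp => ?_, ih hL.2 ha.2⟩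
      rcases mem_insSorted.1 hp with rfl | hp
      · omega
      · exact hL.1 p hp

lemma ConstSign.snd_eq_of_getElem_succ {M : List (ℕ × Bool)} (hM : ConstSign M) {t : ℕ}
    (ht : t + 1 < M.length) (hfst : M[t + 1].1 = M[t].1 + 1) : M[t].2 = M[t + 1].2 := by
  obtain ⟨ε, hε⟩ := hM
  have h₀ := hε t (by omega)
  have h₁ := hε (t + 1) ht
  simp only [List.get_eq_getElem, hfst] at h₀ h₁
  rw [show M[t].1 + 1 + (t + 1) + 1 = M[t].1 + t + 1 + 2 by omega, pow_add, neg_one_sq,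
    mul_one] at h₁
  exact sgn_injective (mul_left_cancel₀ (pow_ne_zero _ (by norm_num)) (h₀.trans h₁.symm))

lemma eq_succ_of_getElem_fst_succ {M : List (ℕ × Bool)}
    (hM : M.Pairwise (fun p q => p.1 < q.1)) {s u : ℕ} (hs : s < M.length)
    (hu : u < M.length) (hfst : M[u].1 = M[s].1 + 1) : u = s + 1 := by
  have hlt := List.pairwise_iff_getElem.1 hM
  rcases lt_trichotomy u s with h | rfl | h
  · have := hlt u s hu hs h; omega
  · omega
  by_contra hne
  have h₁ := hlt s (s + 1) hs (by omega) (by omega)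
  have h₂ := hlt (s + 1) u (by omega) hu (by omega)
  omega

lemma ConstSign.snd_eq_of_fst_succ {M : List (ℕ × Bool)} (hM : ConstSign M)
    (hsorted : M.Pairwise (fun p q => p.1 < q.1)) {a b : ℕ × Bool} (ha : a ∈ M) (hb : b ∈ M)
    (hab : b.1 = a.1 + 1) : a.2 = b.2 := by
  obtain ⟨s, hs, rfl⟩ := List.mem_iff_getElem.1 ha
  obtain ⟨u, hu, rfl⟩ := List.mem_iff_getElem.1 hb
  obtain rfl := eq_succ_of_getElem_fst_succ hsorted hs hu hab
  exact hM.snd_eq_of_getElem_succ hu hab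

lemma ComplOp.avoids_neighbours {n k : ℕ} {γ : Bool} {L : List (ℕ × Bool)}
    (hc : ComplOp n k γ L) : ∀ p ∈ L, p ≠ (k - 1, γ) ∧ p.1 ≠ k ∧ p ≠ (k + 1, γ) := by
  obtain ⟨⟨hchain, hbound⟩, hk, hsign⟩ := hc
  have hsorted : (insSorted (k, !γ) L).Pairwise (fun p q => p.1 < q.1) :=
    pairwise_insSorted (List.isChain_iff_pairwise.1 hchain) hk
  have hins : (k, !γ) ∈ insSorted (k, !γ) L := mem_insSorted.2 (.inl rfl)
  intro p hp
  have hp' : p ∈ insSorted (k, !γ) L := mem_insSorted.2 (.inr hp)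
  refine ⟨?_, hk p hp, ?_⟩ <;> rintro rfl
  · -- `k - 1` truncates in `ℕ`; the bound `1 ≤ i` of standard decompositions excludes `k ≤ 1`.
    have hk₂ : 2 ≤ k := by have := (hbound _ hp).1; dsimp only at this; omega
    have := hsign.snd_eq_of_fst_succ hsorted hp' hins (by dsimp only; omega)
    simp at this
  · have := hsign.snd_eq_of_fst_succ hsorted hins hp' rfl
    simp at this

/-- let `∂_k^γ` be a face operation on `n`-cubes (`k` 1-indexed) and let
`θ` be a non-identity precubical operation complementary to `∂_k^γ`; then the standard
decomposition of `θ` contains no factor `∂_{k−1}^γ`, `∂_k^−`, `∂_k^+` or `∂_{k+1}^γ`.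
Consequently, in a stratified precubical set, any box `b` opposite `∂_k^γ` such that
`θ b` is thin for every non-identity precubical operation `θ` whose standard
decomposition contains none of these factors is admissible. -/
theorem complementary_avoids_neighbours_and_admissibility :
    (∀ (n k : ℕ) (γ : Bool) (L : List (ℕ × Bool)), 1 ≤ k → k ≤ n → L ≠ [] →
      ComplOp n k γ L →
      ∀ p ∈ L, p ≠ (k - 1, γ) ∧ p.1 ≠ k ∧ p ≠ (k + 1, γ)) ∧
    (∀ (P : SPS) (m : ℕ) (k : Fin (m + 1)) (γ : Bool) (b : Fin (m + 1) → Bool → P.X m),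
      P.IsBox k γ b →
      (∀ (p : ℕ × Bool) (L : List (ℕ × Bool)), IsStdList (m + 1) (p :: L) →
        (∀ q ∈ p :: L,
          q ≠ (((k : ℕ) + 1) - 1, γ) ∧ q.1 ≠ (k : ℕ) + 1 ∧ q ≠ ((k : ℕ) + 1 + 1, γ)) →
        P.thin (P.apBoxAux b p L)) →
      P.AdmBox k γ b) :=
  ⟨fun _ _ _ _ _ _ _ hc => hc.avoids_neighbours,
    fun _ _ _ _ _ hbox hthin => ⟨hbox, fun p L hc => hthin p L hc.1 hc.avoids_neighbours⟩⟩

end CubicalNerve
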